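/- arXiv:2402.13601 — 4 statements merged into one kernel-verified Lean document; each statement's English description precedes it below -/
import Mathlib

section
/- Let δ ≥ 3, s ≥ 1 and n be integers with n ≥ (δ−1)s + 2. Then the spectral radius of the graph G₂ = K_s ∨ (K_{n−(δ−1)s−1} ∪ ((δ−2)s+1)K_1) equals the largest real root of the cubic polynomial φ(x) = x³ + (−n + (δ−2)s + 3)x² + (−n − (δ−2)s² + (δ−3)s + 2)x + (δ−2)s²n + sn − (δ−1)(δ−2)s³ − (3δ−5)s² − 2s. -/
open Finset

noncomputable def specRad {V : Type*} [Fintype V] (G : SimpleGraph V) : ℝ :=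
  letI := Classical.decEq V
  letI := Classical.decRel G.Adj
  sSup (spectrum ℝ (G.adjMatrix ℝ))

/-- `joinCliques s t f` is the graph `K_s ∨ (K_{f 0} ∪ K_{f 1} ∪ ⋯ ∪ K_{f (t-1)})`. -/
def joinCliques (s t : ℕ) (f : Fin t → ℕ) :
    SimpleGraph (Fin s ⊕ (Σ i : Fin t, Fin (f i))) where
  Adj x y := x ≠ y ∧ ∀ a b, x = Sum.inr a → y = Sum.inr b → a.1 = b.1
  symm := ⟨fun _x _y h => ⟨h.1.symm, fun a b hy hx => (h.2 b a hx hy).symm⟩⟩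
  loopless := ⟨fun _x h => h.1 rfl⟩

/-- `gJoin s m t p` is the graph `K_s ∨ (K_m ∪ t·K_p)`. -/
def gJoin (s m t p : ℕ) :=
  joinCliques s (t + 1) (Fin.cons m fun _ => p)

/-!
Split the vertices of `K_s ∨ (K_m ∪ t·K_1)` into the parts `K_s`, `K_m` and `t·K_1`. Adjacency
of distinct vertices depends only on their parts, so the adjacency matrix maps vectors constant
on the parts to such vectors through the quotient matrix
`B = !![s-1, m, t; s, m-1, 0; s, 0, 0]`, whose characteristic polynomial is `φ` for
`n = s + m + t`; hence every root of `φ` is an eigenvalue. Conversely, `A v = μ v` expresses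
`(μ + 1) v x` (for `x` in a clique part) or `μ v x` (for `x` in `t·K_1`) through the part sums
of `v`, so for `μ ∉ {0, -1}` the eigenvector is constant on the parts and `μ` is a root of `φ`.
As `φ(m) < 0`, `φ` has a positive root; so the largest eigenvalue is positive, hence a root of
`φ`, and it dominates every root.
-/

open Matrix

theorem Matrix.mem_spectrum_iff_exists_mulVec_eq_smul {n K : Type*} [Fintype n] [DecidableEq n]
    [Field K] (A : Matrix n n K) (μ : K) :
    μ ∈ spectrum K A ↔ ∃ v ≠ 0, A *ᵥ v = μ • v := by
  rw [← Matrix.spectrum_toLin', ← Module.End.hasEigenvalue_iff_mem_spectrum]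
  constructor
  · intro h
    obtain ⟨v, hv, hv0⟩ := h.exists_hasEigenvector
    exact ⟨v, hv0, by simpa using Module.End.mem_eigenspace_iff.1 hv⟩
  · rintro ⟨v, hv0, hv⟩
    exact Module.End.hasEigenvalue_of_hasEigenvector
      ⟨Module.End.mem_eigenspace_iff.2 (by simpa using hv), hv0⟩

namespace SimpleGraph

section Blowup

variable {V ι : Type*} [Fintype V] [DecidableEq V] [Fintype ι] [DecidableEq ι]
  {G : SimpleGraph V} [DecidableRel G.Adj] {R : ι → ι → Prop} [DecidableRel R] {p : V → ι}

variable (R p) in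
/-- When `G.Adj x y ↔ x ≠ y ∧ R (p x) (p y)`, the fibre of `i` under `p` is a clique if `R i i`
and independent otherwise; this is the quotient matrix of that equitable partition. -/
def blowupQuotient : Matrix ι ι ℝ := fun i j =>
  (if R i j then (#{x | p x = j} : ℝ) else 0) - if i = j ∧ R i i then 1 else 0

variable (hG : ∀ x y, G.Adj x y ↔ x ≠ y ∧ R (p x) (p y))
include hG

theorem adjMatrix_mulVec_apply_of_adj_iff (v : V → ℝ) (x : V) :
    (G.adjMatrix ℝ *ᵥ v) x =
      ∑ j, (if R (p x) j then ∑ y with p y = j, v y else 0) -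
        if R (p x) (p x) then v x else 0 := by
  have hterm : ∀ y, (if G.Adj x y then v y else 0) =
      (if R (p x) (p y) then v y else 0) - if y = x ∧ R (p x) (p x) then v y else 0 := by
    intro y
    by_cases hyx : y = x
    · subst hyx; simp
    · simp [hG, hyx, Ne.symm hyx]
  simp only [mulVec, dotProduct, adjMatrix_apply, ite_mul, one_mul, zero_mul, hterm,
    Finset.sum_sub_distrib]
  congr 1
  · rw [← Finset.sum_fiberwise Finset.univ p]
    refine Finset.sum_congr rfl fun j _ => ?_
    split_ifs with h
    · exact Finset.sum_congr rfl fun y hy => by rw [(Finset.mem_filter.1 hy).2, if_pos h]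
    · exact Finset.sum_eq_zero fun y hy => by rw [(Finset.mem_filter.1 hy).2, if_neg h]
  · simp [ite_and]

theorem adjMatrix_mulVec_comp_of_adj_iff (w : ι → ℝ) :
    G.adjMatrix ℝ *ᵥ (w ∘ p) = (blowupQuotient R p *ᵥ w) ∘ p := by
  ext x
  rw [adjMatrix_mulVec_apply_of_adj_iff hG]
  simp only [Function.comp_apply, mulVec, dotProduct, blowupQuotient, sub_mul,
    Finset.sum_sub_distrib, ite_mul, zero_mul, one_mul, ite_and]
  congr 1
  · refine Finset.sum_congr rfl fun j _ => ?_
    split_ifs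
    · rw [Finset.sum_congr rfl fun y hy => by rw [(Finset.mem_filter.1 hy).2], Finset.sum_const,
        nsmul_eq_mul]
    · rfl
  · simp

theorem exists_eq_comp_of_mulVec_eq_smul {v : V → ℝ} {μ : ℝ}
    (hv : G.adjMatrix ℝ *ᵥ v = μ • v) (hμ : μ ≠ 0) (hμ' : μ ≠ -1) : ∃ w : ι → ℝ, v = w ∘ p := by
  refine ⟨fun i => (∑ j, if R i j then ∑ y with p y = j, v y else 0) /
    (μ + if R i i then 1 else 0), funext fun x => ?_⟩
  -- `(μ + [R i i]) • v x` is a combination of the part sums of `v`, with `i` the part of `x`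
  have hx := congrFun hv x
  rw [adjMatrix_mulVec_apply_of_adj_iff hG, Pi.smul_apply, smul_eq_mul] at hx
  have hne : μ + (if R (p x) (p x) then 1 else 0) ≠ 0 := by
    split_ifs
    · exact fun h => hμ' (by linarith)
    · simpa using hμ
  rw [Function.comp_apply, eq_div_iff hne]
  split_ifs at hx ⊢ <;> linarith

variable (hp : Function.Surjective p)
include hp

theorem mem_spectrum_adjMatrix_of_mem_spectrum_blowupQuotient {μ : ℝ}
    (hμ : μ ∈ spectrum ℝ (blowupQuotient R p)) : μ ∈ spectrum ℝ (G.adjMatrix ℝ) := by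
  obtain ⟨w, hw0, hw⟩ := (Matrix.mem_spectrum_iff_exists_mulVec_eq_smul _ μ).1 hμ
  refine (Matrix.mem_spectrum_iff_exists_mulVec_eq_smul _ μ).2 ⟨w ∘ p, ?_, ?_⟩
  · exact fun h => hw0 (hp.injective_comp_right h)
  · rw [adjMatrix_mulVec_comp_of_adj_iff hG, hw]
    rfl

theorem mem_spectrum_blowupQuotient_of_mem_spectrum_adjMatrix {μ : ℝ}
    (hμ : μ ∈ spectrum ℝ (G.adjMatrix ℝ)) (hμ0 : μ ≠ 0) (hμ1 : μ ≠ -1) :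
    μ ∈ spectrum ℝ (blowupQuotient R p) := by
  obtain ⟨v, hv0, hv⟩ := (Matrix.mem_spectrum_iff_exists_mulVec_eq_smul _ μ).1 hμ
  obtain ⟨w, rfl⟩ := exists_eq_comp_of_mulVec_eq_smul hG hv hμ0 hμ1
  refine (Matrix.mem_spectrum_iff_exists_mulVec_eq_smul _ μ).2 ⟨w, ?_, ?_⟩
  · rintro rfl
    exact hv0 rfl
  · rw [adjMatrix_mulVec_comp_of_adj_iff hG] at hv
    exact hp.injective_comp_right hv

end Blowup
end SimpleGraph

def joinCubic (s m t x : ℝ) : ℝ :=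
  x * (x - s + 1) * (x - m + 1) - m * s * x - t * s * (x - m + 1)

theorem mem_spectrum_iff_joinCubic_eq_zero (s m t μ : ℝ) :
    μ ∈ spectrum ℝ !![s - 1, m, t; s, m - 1, 0; s, 0, 0] ↔ joinCubic s m t μ = 0 := by
  rw [spectrum.mem_iff, Matrix.isUnit_iff_isUnit_det, isUnit_iff_ne_zero, not_not,
    Matrix.det_fin_three, joinCubic]
  simp [Matrix.algebraMap_matrix_apply]
  ring_nf

theorem exists_pos_joinCubic_eq_zero {s m t : ℝ} (hs : 1 ≤ s) (hm : 0 ≤ m) (ht : 0 < t) :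
    ∃ r, 0 < r ∧ joinCubic s m t r = 0 := by
  have hcont : Continuous (joinCubic s m t) := by unfold joinCubic; fun_prop
  have hlow : joinCubic s m t m < 0 := by
    have : joinCubic s m t m = -((s - 1) * m * (m + 1) + t * s) := by unfold joinCubic; ring
    rw [this, neg_neg_iff_pos]
    have : 0 ≤ s - 1 := by linarith
    positivity
  have hhigh : 0 ≤ joinCubic s m t (s + m + t) := by
    have : joinCubic s m t (s + m + t) =
        (s + m + t) * m * (t + 1) + (s + t + 1) * (s + (m + t) * (t + 1)) := by
      unfold joinCubic; ring
    rw [this]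
    have : 0 ≤ s := by linarith
    positivity
  obtain ⟨r, hr, hr0⟩ :=
    intermediate_value_Icc (by linarith) hcont.continuousOn ⟨hlow.le, hhigh⟩
  refine ⟨r, hm.trans_lt (hr.1.lt_of_ne ?_), hr0⟩
  rintro rfl
  exact hlow.ne hr0

section JoinGraph

variable {s m t : ℕ}

def joinPattern (i j : Fin 3) : Prop := i = 0 ∨ j = 0 ∨ (i = 1 ∧ j = 1)

instance : DecidableRel joinPattern := fun i j => by unfold joinPattern; infer_instance

abbrev GJoinVertex (s m t : ℕ) :=
  Fin s ⊕ (Σ i : Fin (t + 1), Fin ((Fin.cons m fun _ => 1 : Fin (t + 1) → ℕ) i))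

def gJoinPart : GJoinVertex s m t → Fin 3
  | .inl _ => 0
  | .inr ⟨i, _⟩ => if i = 0 then 1 else 2

theorem gJoin_adj_iff (x y : GJoinVertex s m t) :
    (gJoin s m t 1).Adj x y ↔ x ≠ y ∧ joinPattern (gJoinPart x) (gJoinPart y) := by
  rcases x with a | ⟨i, a⟩ <;> rcases y with b | ⟨j, b⟩ <;>
    simp [gJoin, joinCliques, gJoinPart, joinPattern]
  intro hne
  rcases Fin.eq_zero_or_eq_succ i with rfl | ⟨i, rfl⟩ <;>
    rcases Fin.eq_zero_or_eq_succ j with rfl | ⟨j, rfl⟩ <;>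
    simp [Fin.succ_ne_zero, (Fin.succ_ne_zero _).symm]
  rintro rfl
  exact hne rfl (heq_of_eq (Subsingleton.elim (α := Fin 1) a b))

theorem card_filter_gJoinPart_eq (j : Fin 3) :
    #{x | gJoinPart (s := s) (m := m) (t := t) x = j} = ![s, m, t] j := by
  rw [Finset.card_filter, Fintype.sum_sum_type, ← Finset.univ_sigma_univ, Finset.sum_sigma,
    Fin.sum_univ_succ]
  fin_cases j <;> simp [gJoinPart, Fin.succ_ne_zero]

theorem gJoinPart_surjective (hs : 0 < s) (hm : 0 < m) (ht : 0 < t) :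
    Function.Surjective (gJoinPart (s := s) (m := m) (t := t)) := by
  intro j
  fin_cases j
  · exact ⟨.inl ⟨0, hs⟩, rfl⟩
  · exact ⟨.inr ⟨0, (⟨0, hm⟩ : Fin m)⟩, rfl⟩
  · exact ⟨.inr ⟨(⟨0, ht⟩ : Fin t).succ, (0 : Fin 1)⟩, by simp [gJoinPart]⟩

theorem blowupQuotient_gJoinPart :
    SimpleGraph.blowupQuotient joinPattern (gJoinPart (s := s) (m := m) (t := t)) =
      !![(s : ℝ) - 1, m, t; s, m - 1, 0; s, 0, 0] := by
  ext i j
  fin_cases i <;> fin_cases j <;>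
    simp [SimpleGraph.blowupQuotient, joinPattern, card_filter_gJoinPart_eq]

theorem joinCubic_specRad_gJoin (hs : 0 < s) (hm : 0 < m) (ht : 0 < t) :
    joinCubic s m t (specRad (gJoin s m t 1)) = 0 ∧
      ∀ x, joinCubic s m t x = 0 → x ≤ specRad (gJoin s m t 1) := by
  -- the instances `specRad` is defined with
  let := Classical.decEq (GJoinVertex s m t)
  let := Classical.decRel (gJoin s m t 1).Adj
  have hp := gJoinPart_surjective hs hm ht
  set S := spectrum ℝ ((gJoin s m t 1).adjMatrix ℝ)
  have hroot : ∀ x, joinCubic s m t x = 0 → x ∈ S := fun x hx =>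
    SimpleGraph.mem_spectrum_adjMatrix_of_mem_spectrum_blowupQuotient gJoin_adj_iff hp
      (by rwa [blowupQuotient_gJoinPart, mem_spectrum_iff_joinCubic_eq_zero])
  have hpos : ∀ x ∈ S, 0 < x → joinCubic s m t x = 0 := fun x hx hx0 => by
    rw [← mem_spectrum_iff_joinCubic_eq_zero, ← blowupQuotient_gJoinPart]
    exact SimpleGraph.mem_spectrum_blowupQuotient_of_mem_spectrum_adjMatrix gJoin_adj_iff hp hx
      hx0.ne' (by linarith)
  have hbdd : BddAbove S := (Matrix.finite_spectrum _).bddAbove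
  obtain ⟨r, hr0, hr⟩ := exists_pos_joinCubic_eq_zero (s := s) (m := m) (t := t)
    (by exact_mod_cast hs) (by positivity) (by exact_mod_cast ht)
  have hspec : specRad (gJoin s m t 1) = sSup S := rfl
  rw [hspec]
  refine ⟨hpos _ (Set.Nonempty.csSup_mem ⟨r, hroot r hr⟩ (Matrix.finite_spectrum _)) ?_,
    fun x hx => le_csSup hbdd (hroot x hx)⟩
  exact hr0.trans_le (le_csSup hbdd (hroot r hr))

end JoinGraph

/-- Let `δ ≥ 3`, `s ≥ 1` and `n` be integers with `n ≥ (δ−1)s + 2`.  Then the spectral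
radius of the graph `G₂ = K_s ∨ (K_{n−(δ−1)s−1} ∪ ((δ−2)s+1)K_1)` equals the largest real
root of the cubic polynomial
`φ(x) = x³ + (−n + (δ−2)s + 3)x² + (−n − (δ−2)s² + (δ−3)s + 2)x
  + (δ−2)s²n + sn − (δ−1)(δ−2)s³ − (3δ−5)s² − 2s`. -/
theorem stmt_7 (δ s n : ℕ) (hδ : 3 ≤ δ) (hs : 1 ≤ s) (hn : (δ - 1) * s + 2 ≤ n)
    (φ : ℝ → ℝ)
    (hφ : φ = fun x =>
      x ^ 3 + (-(n : ℝ) + ((δ : ℝ) - 2) * s + 3) * x ^ 2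
        + (-(n : ℝ) - ((δ : ℝ) - 2) * s ^ 2 + ((δ : ℝ) - 3) * s + 2) * x
        + ((δ : ℝ) - 2) * s ^ 2 * n + s * n - ((δ : ℝ) - 1) * ((δ : ℝ) - 2) * s ^ 3
        - (3 * (δ : ℝ) - 5) * s ^ 2 - 2 * s) :
    φ (specRad (gJoin s (n - (δ - 1) * s - 1) ((δ - 2) * s + 1) 1)) = 0 ∧
      ∀ x : ℝ, φ x = 0 → x ≤ specRad (gJoin s (n - (δ - 1) * s - 1) ((δ - 2) * s + 1) 1) := by
  have hδ1 : (δ - 1) * s = (δ - 2) * s + s := by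
    rw [show δ - 1 = δ - 2 + 1 by omega, add_one_mul]
  have hsum : s + (n - (δ - 1) * s - 1) + ((δ - 2) * s + 1) = n := by omega
  have hm : 0 < n - (δ - 1) * s - 1 := by omega
  have hφ_eq : φ = joinCubic s (n - (δ - 1) * s - 1 : ℕ) ((δ - 2) * s + 1 : ℕ) := by
    have hn' : (n : ℝ) = s + (n - (δ - 1) * s - 1 : ℕ) + ((δ - 2) * s + 1 : ℕ) := by
      exact_mod_cast hsum.symm
    have hδ2 : ((δ - 2 : ℕ) : ℝ) = δ - 2 := by rw [Nat.cast_sub (by omega)]; rfl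
    subst hφ
    funext x
    rw [joinCubic, hn']
    push_cast [hδ2]
    ring
  rw [hφ_eq]
  exact joinCubic_specRad_gJoin hs hm (Nat.succ_pos _)
end

section
/- Let δ ≥ 3, s ≥ 1 and n be integers with n ≥ (δ−1)s + 2, and consider the 3×3 real matrix B₂ with rows (s−1, n−(δ−1)s−1, (δ−2)s+1), (s, n−(δ−1)s−2, 0), (s, 0, 0). Then B₂ has three real eigenvalues θ₁ ≥ θ₂ ≥ θ₃, and θ₂ ≤ n − (δ−1)s − 2. -/
open Polynomial


private lemma charpoly_aux (a b c : ℝ) :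
    (!![a - 1, b + 1, c; a, b, 0; a, 0, 0]).charpoly =
      X^3 - C (a + b - 1) * X^2 - C (a + b + a*c) * X + C (a*b*c) := by
  rw [Matrix.charpoly, Matrix.det_fin_three]
  simp [Matrix.charmatrix_apply, Matrix.vecHead, Matrix.vecTail, map_sub, map_add, map_mul, map_one]
  ring

private lemma root_between {f : ℝ → ℝ} (hf : Continuous f) {x y : ℝ} (hxy : x ≤ y)
    (h0 : f x ≤ 0) (h1 : 0 ≤ f y) : ∃ θ ∈ Set.Icc x y, f θ = 0 := by
  obtain ⟨θ, hθ, hfθ⟩ := intermediate_value_Icc hxy hf.continuousOn ⟨h0, h1⟩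
  exact ⟨θ, hθ, hfθ⟩

private lemma root_between' {f : ℝ → ℝ} (hf : Continuous f) {x y : ℝ} (hxy : x ≤ y)
    (h0 : 0 ≤ f x) (h1 : f y ≤ 0) : ∃ θ ∈ Set.Icc x y, f θ = 0 := by
  obtain ⟨θ, hθ, hfθ⟩ := root_between hf.neg hxy (neg_nonpos.mpr h0) (neg_nonneg.mpr h1)
  exact ⟨θ, hθ, neg_eq_zero.mp hfθ⟩

private lemma cubic_bounds {A B Cc M : ℝ} (hA : 0 ≤ A) (hB : 0 ≤ B) (hCc : 0 ≤ Cc)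
    (hM : A + B + Cc + 1 ≤ M) :
    (-M)^3 - A*(-M)^2 - B*(-M) + Cc < 0 ∧ 0 < M^3 - A*M^2 - B*M + Cc := by
  have hM1 : 1 ≤ M := by linarith
  have hM0 : (0:ℝ) ≤ M := by linarith
  have key : A*M^2 + B*M^2 + Cc*M^2 + M^2 ≤ M^3 := by
    nlinarith [mul_le_mul_of_nonneg_left hM hM0,
      mul_le_mul_of_nonneg_left (mul_le_mul_of_nonneg_left hM hM0) hM0]
  have hBM : 0 ≤ B*M*(M-1) := mul_nonneg (mul_nonneg hB hM0) (by linarith)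
  have hsq : 1 ≤ M^2 := by nlinarith
  have hCM : 0 ≤ Cc*(M^2-1) := mul_nonneg hCc (by linarith)
  have hAM : 0 ≤ A*M^2 := mul_nonneg hA (sq_nonneg M)
  constructor <;> nlinarith [key, hBM, hCM, hAM, hsq]

private lemma main_aux (a b c : ℝ) (ha : 1 ≤ a) (hb : 0 ≤ b) (hc : 2 ≤ c) :
    ∃ θ₁ θ₂ θ₃ : ℝ, θ₂ ≤ θ₁ ∧ θ₃ ≤ θ₂ ∧
      (!![a - 1, b + 1, c; a, b, 0; a, 0, 0]).charpoly =
        (X - C θ₁) * (X - C θ₂) * (X - C θ₃) ∧ θ₂ ≤ b := by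
  obtain ⟨A, hA⟩ : ∃ x : ℝ, x = a + b - 1 := ⟨_, rfl⟩
  obtain ⟨B, hB⟩ : ∃ x : ℝ, x = a + b + a*c := ⟨_, rfl⟩
  obtain ⟨Cc, hCc⟩ : ∃ x : ℝ, x = a*b*c := ⟨_, rfl⟩
  have hA0 : 0 ≤ A := by rw [hA]; linarith
  have hac : 2 ≤ a*c := by nlinarith
  have hB0 : 0 ≤ B := by rw [hB]; linarith
  have habc : 0 ≤ a*b*c := mul_nonneg (mul_nonneg (by linarith) hb) (by linarith)
  have hCc0 : 0 ≤ Cc := by rw [hCc]; exact habc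
  have hfc : Continuous (fun x : ℝ => x^3 - A*x^2 - B*x + Cc) := by fun_prop
  obtain ⟨M, hM⟩ : ∃ x : ℝ, x = A + B + Cc + 2 := ⟨_, rfl⟩
  have hM2 : 2 ≤ M := by rw [hM]; linarith
  obtain ⟨hfnegM, hfM⟩ := cubic_bounds hA0 hB0 hCc0 (show A + B + Cc + 1 ≤ M by rw [hM]; linarith)
  have hfneg1 : 0 < (-1:ℝ)^3 - A*(-1)^2 - B*(-1) + Cc := by
    have h : (-1:ℝ)^3 - A*(-1)^2 - B*(-1) + Cc = a*c*(1+b) := by rw [hA, hB, hCc]; ring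
    rw [h]; nlinarith
  obtain ⟨x₂, hx₂gt, hx₂lt, hfx₂⟩ :
      ∃ x₂ : ℝ, -1 < x₂ ∧ x₂ < M ∧ x₂^3 - A*x₂^2 - B*x₂ + Cc < 0 := by
    rcases lt_or_ge 0 b with h | h
    · refine ⟨b, by linarith, by rw [hM, hA, hB, hCc]; linarith, ?_⟩
      have hfb : b^3 - A*b^2 - B*b + Cc = -(a*b*(b+1)) := by rw [hA, hB, hCc]; ring
      rw [hfb]
      nlinarith [mul_pos (mul_pos (show (0:ℝ) < a by linarith) h) (show (0:ℝ) < b+1 by linarith)]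
    · have hb0 : b = 0 := le_antisymm h hb
      refine ⟨1, by norm_num, by linarith, ?_⟩
      have hf1 : (1:ℝ)^3 - A*1^2 - B*1 + Cc = 2 - 2*a - 2*b - a*c + a*b*c := by
        rw [hA, hB, hCc]; ring
      rw [hf1, hb0]; linarith
  obtain ⟨θ₃, ⟨h3l, h3r⟩, hroot3⟩ :=
    root_between hfc (by linarith : -M ≤ (-1:ℝ)) hfnegM.le hfneg1.le
  obtain ⟨θ₂, ⟨h2l, h2r⟩, hroot2'⟩ :=
    root_between' hfc (by linarith : (-1:ℝ) ≤ x₂) hfneg1.le hfx₂.le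
  have hroot2 : θ₂^3 - A*θ₂^2 - B*θ₂ + Cc = 0 := hroot2' 
  obtain ⟨θ₁, ⟨h1l, h1r⟩, hroot1⟩ := root_between hfc hx₂lt.le hfx₂.le hfM.le
  have e₁ : θ₁^3 - A*θ₁^2 - B*θ₁ + Cc = 0 := hroot1
  have e₂ : θ₂^3 - A*θ₂^2 - B*θ₂ + Cc = 0 := hroot2
  have e₃ : θ₃^3 - A*θ₃^2 - B*θ₃ + Cc = 0 := hroot3
  have h23 : θ₃ < θ₂ := by
    rcases eq_or_lt_of_le h2l with h | h
    · exfalso; rw [← h] at e₂; linarith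
    · linarith
  have h12 : θ₂ < θ₁ := by
    rcases eq_or_lt_of_le h1l with h | h
    · exfalso; rw [← h] at e₁; linarith
    · linarith
  have k12 : θ₁^2 + θ₁*θ₂ + θ₂^2 - A*(θ₁+θ₂) - B = 0 := by
    have key : (θ₁ - θ₂) * (θ₁^2 + θ₁*θ₂ + θ₂^2 - A*(θ₁+θ₂) - B) = 0 := by
      linear_combination e₁ - e₂
    rcases mul_eq_zero.1 key with h | h
    · exact absurd (sub_eq_zero.1 h) (ne_of_gt h12)
    · exact h
  have k23 : θ₂^2 + θ₂*θ₃ + θ₃^2 - A*(θ₂+θ₃) - B = 0 := by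
    have key : (θ₂ - θ₃) * (θ₂^2 + θ₂*θ₃ + θ₃^2 - A*(θ₂+θ₃) - B) = 0 := by
      linear_combination e₂ - e₃
    rcases mul_eq_zero.1 key with h | h
    · exact absurd (sub_eq_zero.1 h) (ne_of_gt h23)
    · exact h
  have s₁ : θ₁ + θ₂ + θ₃ = A := by
    have key : (θ₁ - θ₃) * (θ₁ + θ₂ + θ₃ - A) = 0 := by linear_combination k12 - k23
    rcases mul_eq_zero.1 key with h | h
    · exact absurd (sub_eq_zero.1 h) (ne_of_gt (by linarith : θ₃ < θ₁))
    · linarith [h]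
  have s₂ : θ₁*θ₂ + θ₁*θ₃ + θ₂*θ₃ = -B := by linear_combination (θ₁+θ₂) * s₁ - k12
  have s₃ : θ₁*θ₂*θ₃ = -Cc := by linear_combination e₁ - θ₁^2 * s₁ + θ₁ * s₂
  have hθ2b : θ₂ ≤ b := by
    by_contra hlt
    push_neg at hlt
    have hfbval : b^3 - A*b^2 - B*b + Cc = -(a*b*(b+1)) := by rw [hA, hB, hCc]; ring
    have hprod : (b - θ₁) * (b - θ₂) * (b - θ₃) = -(a*b*(b+1)) := by
      linear_combination (-b^2) * s₁ + b * s₂ - s₃ + hfbval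
    have h1p : 0 < θ₁ - b := by linarith
    have h2p : 0 < θ₂ - b := by linarith
    have h3p : 0 < b - θ₃ := by linarith
    have hpos : 0 < (θ₁ - b) * (θ₂ - b) * (b - θ₃) := mul_pos (mul_pos h1p h2p) h3p
    have heq : (θ₁ - b) * (θ₂ - b) * (b - θ₃) = -(a*b*(b+1)) := by linear_combination hprod
    have hnn : 0 ≤ a*b*(b+1) := mul_nonneg (mul_nonneg (by linarith) hb) (by linarith)
    rw [heq] at hpos
    linarith
  refine ⟨θ₁, θ₂, θ₃, h12.le, h23.le, ?_, hθ2b⟩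
  rw [charpoly_aux, ← hA, ← hB, ← hCc, ← s₁,
    show B = -(θ₁*θ₂ + θ₁*θ₃ + θ₂*θ₃) by linarith [s₂],
    show Cc = -(θ₁*θ₂*θ₃) by linarith [s₃]]
  simp only [map_add, map_neg, map_mul]
  ring

/-- Let `δ ≥ 3`, `s ≥ 1` and `n` be integers with `n ≥ (δ−1)s + 2`, and consider the
`3×3` real matrix `B₂` with rows `(s−1, n−(δ−1)s−1, (δ−2)s+1)`, `(s, n−(δ−1)s−2, 0)`,
`(s, 0, 0)`.  Then `B₂` has three real eigenvalues `θ₁ ≥ θ₂ ≥ θ₃`, and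
`θ₂ ≤ n − (δ−1)s − 2`. -/theorem stmt_8 (δ s n : ℕ) (hδ : 3 ≤ δ) (hs : 1 ≤ s) (hn : (δ - 1) * s + 2 ≤ n) :
    ∃ θ₁ θ₂ θ₃ : ℝ, θ₂ ≤ θ₁ ∧ θ₃ ≤ θ₂ ∧
      (!![(s : ℝ) - 1, (n : ℝ) - ((δ : ℝ) - 1) * s - 1, ((δ : ℝ) - 2) * s + 1;
          (s : ℝ), (n : ℝ) - ((δ : ℝ) - 1) * s - 2, 0;
          (s : ℝ), 0, 0]).charpoly =
        (X - C θ₁) * (X - C θ₂) * (X - C θ₃) ∧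
      θ₂ ≤ (n : ℝ) - ((δ : ℝ) - 1) * s - 2 := by
  have hδ' : (3:ℝ) ≤ (δ:ℝ) := by exact_mod_cast hδ
  have hs' : (1:ℝ) ≤ (s:ℝ) := by exact_mod_cast hs
  have hn' : ((δ:ℝ) - 1) * s + 2 ≤ (n:ℝ) := by
    have h := hn
    have h2 : (((δ - 1) * s + 2 : ℕ) : ℝ) ≤ (n:ℝ) := by exact_mod_cast h
    rw [Nat.cast_add, Nat.cast_mul, Nat.cast_sub (by omega : 1 ≤ δ)] at h2
    push_cast at h2 ⊢
    linarith
  have hb : (0:ℝ) ≤ (n:ℝ) - ((δ:ℝ) - 1) * s - 2 := by linarith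
  have hc : (2:ℝ) ≤ ((δ:ℝ) - 2) * s + 1 := by nlinarith
  obtain ⟨θ₁, θ₂, θ₃, h12, h23, hcp, hθ₂⟩ :=
    main_aux (s:ℝ) ((n:ℝ) - ((δ:ℝ) - 1) * s - 2) (((δ:ℝ) - 2) * s + 1) hs' hb hc
  refine ⟨θ₁, θ₂, θ₃, h12, h23, ?_, hθ₂⟩
  rw [← hcp]
  congr 1
  ext i j
  fin_cases i <;> fin_cases j <;> simp <;> ring
end

section
/- Let δ ≥ 3 and n ≥ 2δ² be integers. Then ρ(K_δ ∨ (K_{n−δ(δ−1)−1} ∪ (δ(δ−2)+1)K_1)) > n − δ(δ−2) − 2. -/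
open Finset

/-!
Test the Rayleigh quotient of `G = K_s ∨ (K_m ∪ t·K_1)` on the vector that is `1` on `K_s ∪ K_m`
and `c > 0` on the isolated vertices. With `N = s + m`, its quadratic form is
`N (N - 1) + 2 s t c` and its squared norm is `N + t c²`, so the quotient exceeds `N - 1` as soon
as `(N - 1) c < 2 s`. For `s = δ` and `m = n - δ(δ - 1) - 1` one has `N - 1 = n - δ(δ - 2) - 2`.
-/

open Matrix SimpleGraph
open scoped MatrixOrder

theorem Matrix.IsHermitian.dotProduct_mulVec_le_sSup_spectrum {n : Type*} [Fintype n]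
    [DecidableEq n] {A : Matrix n n ℝ} (hA : A.IsHermitian) (x : n → ℝ) :
    x ⬝ᵥ (A *ᵥ x) ≤ sSup (spectrum ℝ A) * (x ⬝ᵥ x) := by
  have hle : A ≤ algebraMap ℝ (Matrix n n ℝ) (sSup (spectrum ℝ A)) :=
    le_algebraMap_of_spectrum_le (fun r hr => le_csSup A.finite_real_spectrum.bddAbove hr)
      hA.isSelfAdjoint
  simpa [sub_mulVec, Algebra.algebraMap_eq_smul_one, smul_mulVec, dotProduct_sub] using
    (Matrix.le_iff.mp hle).dotProduct_mulVec_nonneg x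

theorem SimpleGraph.dotProduct_adjMatrix_mulVec {V : Type*} [Fintype V] (G : SimpleGraph V)
    [DecidableRel G.Adj] (x : V → ℝ) :
    x ⬝ᵥ (G.adjMatrix ℝ *ᵥ x) = ∑ u, ∑ v, if G.Adj u v then x u * x v else 0 := by
  simp [dotProduct, mulVec, mul_sum, adjMatrix_apply, ite_mul, mul_ite]

theorem sum_adj_mul_le_specRad_mul {V : Type*} [Fintype V] (G : SimpleGraph V)
    [DecidableRel G.Adj] (x : V → ℝ) :
    ∑ u, ∑ v, (if G.Adj u v then x u * x v else 0) ≤ specRad G * ∑ v, x v ^ 2 := by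
  classical
  rw [← G.dotProduct_adjMatrix_mulVec]
  convert (G.isHermitian_adjMatrix ℝ).dotProduct_mulVec_le_sSup_spectrum x using 2
  · rw [specRad]
    congr!
  · simp [dotProduct, sq]

theorem Fintype.sum_sum_ite_ne_mul {ι : Type*} [Fintype ι] [DecidableEq ι] (x : ι → ℝ) :
    ∑ a, ∑ b, (if a = b then 0 else x a * x b) = (∑ a, x a) ^ 2 - ∑ a, x a ^ 2 := by
  have hsplit : ∀ a b,
      (if a = b then 0 else x a * x b) = x a * x b - if a = b then x a * x b else 0 := by
    intro a b
    split_ifs <;> simp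
  simp only [hsplit, sum_sub_distrib, sum_ite_eq, sum_mul_sum, sq]

theorem Fintype.sum_sigma_sum_ite_mul {ι : Type*} {κ : ι → Type*} [Fintype ι] [DecidableEq ι]
    [∀ i, Fintype (κ i)] [∀ i, DecidableEq (κ i)] (y : (Σ i, κ i) → ℝ) :
    ∑ p, ∑ q, (if p ≠ q ∧ p.1 = q.1 then y p * y q else 0) =
      ∑ i, ((∑ j, y ⟨i, j⟩) ^ 2 - ∑ j, y ⟨i, j⟩ ^ 2) := by
  simp only [Fintype.sum_sigma]
  refine Finset.sum_congr rfl fun i _ => ?_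
  rw [← Fintype.sum_sum_ite_ne_mul]
  refine Finset.sum_congr rfl fun j _ => ?_
  rw [Fintype.sum_eq_single i]
  · simp [ite_not]
  · intro i' hi'
    simp [Ne.symm hi']

section joinCliques

variable {s r : ℕ} {f : Fin r → ℕ}

@[simp] theorem joinCliques_adj_inl_inl {a b : Fin s} :
    (joinCliques s r f).Adj (.inl a) (.inl b) ↔ a ≠ b := by
  simp [joinCliques]

@[simp] theorem joinCliques_adj_inl_inr {a : Fin s} {p : Σ i, Fin (f i)} :
    (joinCliques s r f).Adj (.inl a) (.inr p) := by
  simp [joinCliques]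

@[simp] theorem joinCliques_adj_inr_inl {a : Fin s} {p : Σ i, Fin (f i)} :
    (joinCliques s r f).Adj (.inr p) (.inl a) := by
  simp [joinCliques]

@[simp] theorem joinCliques_adj_inr_inr {p q : Σ i, Fin (f i)} :
    (joinCliques s r f).Adj (.inr p) (.inr q) ↔ p ≠ q ∧ p.1 = q.1 := by
  simp [joinCliques]

theorem joinCliques_sum_adj_mul [DecidableRel (joinCliques s r f).Adj]
    (x : Fin s ⊕ (Σ i, Fin (f i)) → ℝ) :
    ∑ u, ∑ v, (if (joinCliques s r f).Adj u v then x u * x v else 0) =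
      (∑ a, x (.inl a)) ^ 2 - ∑ a, x (.inl a) ^ 2
        + 2 * (∑ a, x (.inl a)) * ∑ p, x (.inr p)
        + ∑ i, ((∑ j, x (.inr ⟨i, j⟩)) ^ 2 - ∑ j, x (.inr ⟨i, j⟩) ^ 2) := by
  simp only [Fintype.sum_sum_type, joinCliques_adj_inl_inl, joinCliques_adj_inl_inr,
    joinCliques_adj_inr_inl, joinCliques_adj_inr_inr, if_true, ite_not]
  simp only [sum_add_distrib, ← sum_mul_sum]
  rw [Fintype.sum_sum_ite_ne_mul fun a => x (.inl a),
    Fintype.sum_sigma_sum_ite_mul fun p => x (.inr p)]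
  ring

end joinCliques

section gJoin

variable {s m t : ℕ}

def gJoinWeight (s m t : ℕ) (c : ℝ) :
    Fin s ⊕ (Σ i : Fin (t + 1), Fin ((Fin.cons m fun _ => 1 : Fin (t + 1) → ℕ) i)) → ℝ :=
  Sum.elim (fun _ => 1) (fun p => (Fin.cons 1 fun _ => c : Fin (t + 1) → ℝ) p.1)

theorem sum_gJoinWeight_sq (c : ℝ) : ∑ v, gJoinWeight s m t c v ^ 2 = s + m + t * c ^ 2 := by
  simp only [gJoinWeight, Fintype.sum_sum_type, Sum.elim_inl, one_pow, sum_const, card_univ,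
    Fintype.card_fin, nsmul_eq_mul, mul_one, Sum.elim_inr, Fintype.sum_sigma, Fin.sum_univ_succ,
    Fin.cons_zero, Fin.cons_succ, Nat.cast_one, one_mul]
  ring

theorem gJoin_sum_adj_mul_gJoinWeight [DecidableRel (gJoin s m t 1).Adj] (c : ℝ) :
    ∑ u, ∑ v, (if (gJoin s m t 1).Adj u v then gJoinWeight s m t c u * gJoinWeight s m t c v
      else 0) = (s + m) * (s + m - 1) + 2 * s * t * c := by
  unfold gJoin at *
  rw [joinCliques_sum_adj_mul]
  simp only [gJoinWeight, Sum.elim_inl, sum_const, card_univ, Fintype.card_fin, nsmul_eq_mul,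
    mul_one, one_pow, Sum.elim_inr, Fintype.sum_sigma, Fin.sum_univ_succ, Fin.cons_zero,
    Fin.cons_succ, Nat.cast_one, one_mul, sum_sub_distrib, add_sub_add_right_eq_sub]
  ring

theorem sub_one_lt_specRad_gJoin (hs : 0 < s) (ht : 0 < t) :
    (s + m : ℝ) - 1 < specRad (gJoin s m t 1) := by
  classical
  set N : ℝ := s + m
  have hs' : (0 : ℝ) < s := by exact_mod_cast hs
  have ht' : (0 : ℝ) < t := by exact_mod_cast ht
  have hN : 0 < N := by positivity
  set c : ℝ := s / N
  have hc : 0 < c := by positivity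
  have hcN : c * N = s := div_mul_cancel₀ _ hN.ne'
  have hρ := sum_adj_mul_le_specRad_mul (gJoin s m t 1) (gJoinWeight s m t c)
  rw [gJoin_sum_adj_mul_gJoinWeight, sum_gJoinWeight_sq] at hρ
  have hD : 0 < N + t * c ^ 2 := by positivity
  refine lt_of_mul_lt_mul_right (a := N + t * c ^ 2) ?_ hD.le
  calc (N - 1) * (N + t * c ^ 2) = N * (N - 1) + t * c * (s - c) := by
        rw [← hcN]; ring
    _ < N * (N - 1) + 2 * s * t * c := by nlinarith [mul_pos ht' hc]
    _ ≤ _ := hρ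

end gJoin

/-- Let `δ ≥ 3` and `n ≥ 2δ²` be integers.  Then
`ρ(K_δ ∨ (K_{n−δ(δ−1)−1} ∪ (δ(δ−2)+1)K_1)) > n − δ(δ−2) − 2`. -/
theorem stmt_9 (δ n : ℕ) (hδ : 3 ≤ δ) (hn : 2 * δ ^ 2 ≤ n) :
    (n : ℝ) - (δ : ℝ) * ((δ : ℝ) - 2) - 2 <
      specRad (gJoin δ (n - δ * (δ - 1) - 1) (δ * (δ - 2) + 1) 1) := by
  have hm : δ * (δ - 1) + 1 ≤ n := by
    have : δ * (δ - 1) ≤ δ ^ 2 := by rw [sq]; exact Nat.mul_le_mul_left _ (Nat.sub_le _ _)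
    nlinarith
  have key := sub_one_lt_specRad_gJoin (s := δ) (m := n - δ * (δ - 1) - 1)
    (t := δ * (δ - 2) + 1) (by omega) (by omega)
  convert key using 1
  rw [Nat.sub_sub, Nat.cast_sub hm]
  push_cast [Nat.cast_sub (by omega : 1 ≤ δ)]
  ring
end

section
/- Let δ ≥ 3, n ≥ 2δ² and s be integers with 1 ≤ s ≤ δ − 1. Then ρ(K_s ∨ (K_{n−s−((δ−2)s+1)(δ+1−s)} ∪ ((δ−2)s+1)K_{δ+1−s})) < ρ(K_δ ∨ (K_{n−δ(δ−1)−1} ∪ (δ(δ−2)+1)K_1)). -/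
open Finset

/-! The right graph contains a clique on `n - (δ - 1)²` vertices (its `K_δ` together with the
large clique), and the Rayleigh quotient of the clique's indicator vector gives
`ρ ≥ n - (δ - 1)² - 1`. For a graph without isolated vertices, Gershgorin's theorem applied to
`A²` gives Hong's bound `ρ² ≤ 2e - |V| + 1`; for the left graph this is the row sum of `A²` at a
vertex of `K_s`, and a polynomial inequality in `δ`, `s`, `n` shows that it is less than
`(n - (δ - 1)² - 1)²`. -/

namespace SimpleGraph

variable {V : Type*} [Fintype V] (G : SimpleGraph V) [DecidableRel G.Adj]

lemma sum_adjMatrix_apply (u : V) : ∑ w, G.adjMatrix ℝ u w = G.degree u := by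
  simpa [Matrix.mulVec, dotProduct] using
    G.adjMatrix_mulVec_const_apply (α := ℝ) (a := 1) (v := u)

lemma sum_adjMatrix_mul_self_apply (v : V) :
    ∑ w, (G.adjMatrix ℝ * G.adjMatrix ℝ) v w = ∑ u ∈ G.neighborFinset v, (G.degree u : ℝ) := by
  simp only [adjMatrix_mul_apply]
  rw [Finset.sum_comm]
  simp only [sum_adjMatrix_apply]

/-- Every vertex outside `N(v)` has degree at least `1`, and `v` itself has degree `|N(v)|`. -/
lemma sum_degree_neighborFinset_add_card_le (hG : ∀ v, 0 < G.degree v) (v : V) :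
    ∑ u ∈ G.neighborFinset v, G.degree u + Fintype.card V ≤ 2 * #G.edgeFinset + 1 := by
  classical
  have hv : v ∈ (G.neighborFinset v)ᶜ := by simp
  have hrest : #((G.neighborFinset v)ᶜ.erase v) ≤
      ∑ u ∈ (G.neighborFinset v)ᶜ.erase v, G.degree u := by
    simpa only [smul_eq_mul, mul_one] using
      card_nsmul_le_sum _ (fun u => G.degree u) 1 fun u _ => hG u
  have hcard : #((G.neighborFinset v)ᶜ.erase v) + G.degree v + 1 = Fintype.card V := by
    rw [card_erase_of_mem hv, card_compl, card_neighborFinset_eq_degree]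
    have := G.degree_lt_card_verts v
    omega
  rw [← sum_degrees_eq_twice_card_edges, ← sum_add_sum_compl (G.neighborFinset v),
    ← add_sum_erase _ _ hv]
  omega

section Spectrum

variable [DecidableEq V]

lemma specRad_eq_sSup : specRad G = sSup (spectrum ℝ (G.adjMatrix ℝ)) := by
  unfold specRad
  congr!

lemma le_specRad_of_mem_spectrum {μ : ℝ} (hμ : μ ∈ spectrum ℝ (G.adjMatrix ℝ)) :
    μ ≤ specRad G :=
  G.specRad_eq_sSup ▸ le_csSup Matrix.finite_real_spectrum.bddAbove hμ

lemma exists_sq_le_sum_degree_of_mem_spectrum {μ : ℝ}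
    (hμ : μ ∈ spectrum ℝ (G.adjMatrix ℝ)) :
    ∃ v, μ ^ 2 ≤ ∑ u ∈ G.neighborFinset v, (G.degree u : ℝ) := by
  rw [← Matrix.spectrum_toLin', ← Module.End.hasEigenvalue_iff_mem_spectrum] at hμ
  have hμ2 := hμ.pow 2
  rw [pow_two, Module.End.mul_eq_comp, ← Matrix.toLin'_mul] at hμ2
  obtain ⟨v, hv⟩ := eigenvalue_mem_ball hμ2
  refine ⟨v, ?_⟩
  have hnonneg : ∀ j, 0 ≤ (G.adjMatrix ℝ * G.adjMatrix ℝ) v j := fun j => by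
    simp only [adjMatrix_mul_apply, adjMatrix_apply]
    exact sum_nonneg fun _ _ => by split_ifs <;> norm_num
  rw [Metric.mem_closedBall, Real.dist_eq] at hv
  simp only [Real.norm_eq_abs, abs_of_nonneg (hnonneg _)] at hv
  rw [← sum_adjMatrix_mul_self_apply, ← add_sum_erase _ _ (mem_univ v)]
  linarith [le_abs_self (μ ^ 2 - (G.adjMatrix ℝ * G.adjMatrix ℝ) v v)]

variable {G}

lemma IsNClique.exists_mem_spectrum_le {k : ℕ} {S : Finset V} (hS : G.IsNClique k S)
    (hk : 0 < k) : ∃ μ ∈ spectrum ℝ (G.adjMatrix ℝ), (k : ℝ) - 1 ≤ μ := by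
  set T := (G.adjMatrix ℝ).toEuclideanLin
  have hT : T.IsSymmetric :=
    Matrix.isSymmetric_toEuclideanLin_iff.mpr (G.isHermitian_adjMatrix ℝ)
  have : Nonempty V := (card_pos.mp (hS.card_eq ▸ hk)).to_subtype.map (↑)
  refine ⟨_, Matrix.spectrum_toLpLin (A := G.adjMatrix ℝ) 2 ▸
    hT.hasEigenvalue_iSup_of_finiteDimensional.mem_spectrum, ?_⟩
  set x : EuclideanSpace ℝ V := WithLp.toLp 2 (fun v => if v ∈ S then 1 else 0)
  have hTx : inner ℝ (T x) x = k * (k - 1) := by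
    have hrow : ∀ v ∈ S, (#(G.neighborFinset v ∩ S) : ℝ) = k - 1 := fun v hv => by
      have : G.neighborFinset v ∩ S = S.erase v := by
        ext u
        simp only [mem_inter, mem_neighborFinset, mem_erase]
        exact ⟨fun h => ⟨h.1.ne', h.2⟩, fun h => ⟨hS.isClique hv h.2 h.1.symm, h.2⟩⟩
      rw [this, card_erase_of_mem hv, hS.card_eq, Nat.cast_pred hk]
    simp only [T, x, PiLp.inner_apply, Matrix.toLpLin_toLp]
    simp only [Matrix.toLin'_apply, adjMatrix_mulVec_apply, sum_ite_mem, sum_const, nsmul_eq_mul,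
      mul_one, RCLike.inner_apply, map_natCast, ite_mul, one_mul, zero_mul, univ_inter,
      sum_congr rfl hrow, hS.card_eq]
  have hx : ‖x‖ ^ 2 = k := by simp [x, EuclideanSpace.norm_sq_eq, hS.card_eq]
  have hx0 : x ≠ 0 := by
    rw [← norm_ne_zero_iff, ← pow_ne_zero_iff two_ne_zero, hx]
    exact_mod_cast hk.ne'
  refine le_trans ?_ (le_ciSup ?_ (⟨x, hx0⟩ : {x : EuclideanSpace ℝ V // x ≠ 0}))
  · rw [hTx, hx, RCLike.re_to_real, mul_div_cancel_left₀ _ (by positivity)]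
  · refine ⟨‖LinearMap.toContinuousLinearMap T‖, ?_⟩
    rintro _ ⟨y, rfl⟩
    exact (le_abs_self _).trans
      ((LinearMap.toContinuousLinearMap T).rayleighQuotient_le_norm y)

lemma IsNClique.sub_one_le_specRad {k : ℕ} {S : Finset V} (hS : G.IsNClique k S)
    (hk : 0 < k) : (k : ℝ) - 1 ≤ specRad G :=
  let ⟨_, hμ, hle⟩ := hS.exists_mem_spectrum_le hk
  hle.trans (G.le_specRad_of_mem_spectrum hμ)

end Spectrum

lemma specRad_le_sqrt_of_degree_pos (hG : ∀ v, 0 < G.degree v) :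
    specRad G ≤ √(2 * #G.edgeFinset + 1 - Fintype.card V) := by
  classical
  rw [specRad_eq_sSup]
  refine Real.sSup_le (fun μ hμ => ?_) (Real.sqrt_nonneg _)
  obtain ⟨v, hv⟩ := G.exists_sq_le_sum_degree_of_mem_spectrum hμ
  have := G.sum_degree_neighborFinset_add_card_le hG v
  refine (le_abs_self μ).trans (Real.abs_le_sqrt (hv.trans ?_))
  rw [le_sub_iff_add_le]
  exact_mod_cast this

end SimpleGraph

namespace joinCliques

open SimpleGraph

variable {s t : ℕ} {f : Fin t → ℕ}

@[simp] lemma adj_inl_left {a : Fin s} {y : Fin s ⊕ (Σ i : Fin t, Fin (f i))} :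
    (joinCliques s t f).Adj (.inl a) y ↔ .inl a ≠ y :=
  ⟨And.left, fun h => ⟨h, fun _ _ h' => by cases h'⟩⟩

@[simp] lemma adj_inl_right {x : Fin s ⊕ (Σ i : Fin t, Fin (f i))} {a : Fin s} :
    (joinCliques s t f).Adj x (.inl a) ↔ x ≠ .inl a :=
  ⟨And.left, fun h => ⟨h, fun _ _ _ h' => by cases h'⟩⟩

@[simp] lemma adj_inr_inr {z z' : Σ i : Fin t, Fin (f i)} :
    (joinCliques s t f).Adj (.inr z) (.inr z') ↔ z ≠ z' ∧ z.1 = z'.1 :=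
  ⟨fun h => ⟨fun he => h.1 (congrArg _ he), h.2 z z' rfl rfl⟩,
   fun h => ⟨fun he => h.1 (Sum.inr_injective he), by rintro _ _ ⟨⟩ ⟨⟩; exact h.2⟩⟩

section Degree

variable [DecidableRel (joinCliques s t f).Adj]

lemma neighborFinset_inr (j : Fin t) (c : Fin (f j)) :
    (joinCliques s t f).neighborFinset (.inr ⟨j, c⟩) = univ.map .inl ∪
      (univ.erase c).map ((Function.Embedding.sigmaMk (β := fun i => Fin (f i)) j).trans .inr) := by
  ext (a | ⟨i, b⟩)
  · simp
  · simp only [mem_neighborFinset, adj_inr_inr, mem_union, mem_map]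
    constructor
    · rintro ⟨hne, rfl⟩
      exact Or.inr ⟨b, by simpa [eq_comm] using hne, rfl⟩
    · rintro (⟨_, _, ⟨⟩⟩ | ⟨b', hb', h⟩)
      simp only [Function.Embedding.trans_apply, Function.Embedding.sigmaMk_apply,
        Function.Embedding.inr_apply] at h
      obtain ⟨rfl, h⟩ := Sigma.mk.inj_iff.mp (Sum.inr_injective h)
      obtain rfl := eq_of_heq h
      exact ⟨by simpa [eq_comm] using hb', rfl⟩

lemma degree_inl (a : Fin s) : (joinCliques s t f).degree (.inl a) = s + ∑ i, f i - 1 := by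
  rw [← card_neighborFinset_eq_degree, neighborFinset_eq_filter]
  simp [filter_ne, Fintype.card_sigma]

lemma degree_inr (j : Fin t) (c : Fin (f j)) :
    (joinCliques s t f).degree (.inr ⟨j, c⟩) = s + f j - 1 := by
  rw [← card_neighborFinset_eq_degree, neighborFinset_inr,
    card_union_of_disjoint (by simp [Finset.disjoint_left]), card_map, card_map,
    card_erase_of_mem (mem_univ _)]
  simp only [card_univ, Fintype.card_fin]
  have := c.pos
  omega

lemma sum_degree :
    ∑ v, (joinCliques s t f).degree v = s * (s + ∑ i, f i - 1) + ∑ i, f i * (s + f i - 1) := by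
  simp [Fintype.sum_sum_type, Fintype.sum_sigma, degree_inl, degree_inr]

lemma isNClique_insert_neighborFinset_inr (z : Σ i : Fin t, Fin (f i)) :
    (joinCliques s t f).IsNClique (s + f z.1)
      (insert (.inr z) ((joinCliques s t f).neighborFinset (.inr z))) := by
  obtain ⟨j, c⟩ := z
  refine ⟨?_, ?_⟩
  · have hmem : ∀ w, .inr w ∈ insert (.inr ⟨j, c⟩) ((joinCliques s t f).neighborFinset
        (.inr ⟨j, c⟩)) → w.1 = j := by
      rintro w hw
      simp only [mem_insert, mem_neighborFinset, adj_inr_inr, Sum.inr.injEq] at hw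
      rcases hw with rfl | ⟨-, h⟩
      exacts [rfl, h.symm]
    rintro (a | w) hx (a' | w') hy hne
    · simpa using hne
    · simp
    · simp
    · exact adj_inr_inr.mpr ⟨fun h => hne (h ▸ rfl), (hmem w hx).trans (hmem w' hy).symm⟩
  · rw [card_insert_of_notMem (by simp), card_neighborFinset_eq_degree, degree_inr]
    have := c.pos
    dsimp only
    omega

end Degree

lemma sub_one_le_specRad (z : Σ i : Fin t, Fin (f i)) :
    (s : ℝ) + f z.1 - 1 ≤ specRad (joinCliques s t f) := by
  classical
  exact_mod_cast (isNClique_insert_neighborFinset_inr z).sub_one_le_specRad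
    (Nat.add_pos_right _ z.2.pos)

lemma specRad_le_sqrt (hs : 1 ≤ s) (hf : 1 ≤ ∑ i, f i) :
    specRad (joinCliques s t f) ≤
      √(((s : ℝ) - 1) * (s + ∑ i, (f i : ℝ) - 1) + ∑ i, (f i : ℝ) * (s + f i - 1)) := by
  classical
  have hdeg : ∀ v, 0 < (joinCliques s t f).degree v := by
    rintro (a | ⟨j, c⟩)
    · rw [degree_inl]; omega
    · rw [degree_inr]; have := c.pos; omega
  have hedges : (2 * #(joinCliques s t f).edgeFinset : ℝ) =
      s * (s + ∑ i, (f i : ℝ) - 1) + ∑ i, (f i : ℝ) * (s + f i - 1) := by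
    have hcast : ∀ i, ((s + f i - 1 : ℕ) : ℝ) = s + f i - 1 := fun i => by
      rw [Nat.cast_sub (by omega), Nat.cast_add, Nat.cast_one]
    rw [← Nat.cast_ofNat, ← Nat.cast_mul, ← sum_degrees_eq_twice_card_edges, sum_degree]
    push_cast [Nat.cast_sub (by omega : 1 ≤ s + ∑ i, f i), hcast]
    ring
  refine (specRad_le_sqrt_of_degree_pos _ hdeg).trans_eq ?_
  simp only [hedges, Fintype.card_sum, Fintype.card_sigma, Fintype.card_fin]
  push_cast
  ring_nf

end joinCliques

lemma specRad_gJoin_le_sqrt {s m t p : ℕ} (hs : 1 ≤ s) (h : 1 ≤ m + t * p) :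
    specRad (gJoin s m t p) ≤
      √(((s : ℝ) - 1) * (s + (m + t * p) - 1) + (m * (s + m - 1) + t * (p * (s + p - 1)))) := by
  unfold gJoin
  simpa [Fin.sum_univ_succ] using
    joinCliques.specRad_le_sqrt (f := Fin.cons m fun _ => p) hs
      (by simpa [Fin.sum_univ_succ] using h)

lemma sub_one_le_specRad_gJoin {s m t p : ℕ} (hm : 0 < m) :
    (s : ℝ) + m - 1 ≤ specRad (gJoin s m t p) := by
  unfold gJoin
  exact joinCliques.sub_one_le_specRad (f := (Fin.cons m fun _ => p : Fin (t + 1) → ℕ))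
    ⟨0, ⟨0, hm⟩⟩

section Arithmetic

variable {d s n t p m : ℝ}

/-- Both sides are monic quadratics in `n`; their difference increases with `n` because
`t * p ≥ (d - 1)² + (d - 1)`. -/
lemma rowSum_lt_of_eq_sub (hd : 3 ≤ d) (hs₁ : 1 ≤ s) (hs₂ : s ≤ d - 1) (hn : 2 * d ^ 2 ≤ n)
    (ht : t = (d - 2) * s + 1) (hp : p = d + 1 - s) (hm₀ : 0 ≤ m) (hm : m = n - s - t * p) :
    (s - 1) * (s + (m + t * p) - 1) + (m * (s + m - 1) + t * (p * (s + p - 1)))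
      < (n - (d - 1) ^ 2 - 1) ^ 2 := by
  subst ht hp
  set u := ((d - 2) * s + 1) * (d + 1 - s) - (d - 1) ^ 2 - d + 1
  have hu0 : 0 ≤ u := by
    have h1 : 0 ≤ d ^ 2 - 2 * d - 1 - (d - 2) * s := by
      nlinarith [mul_nonneg (by linarith : (0:ℝ) ≤ d - 1 - s) (by linarith : (0:ℝ) ≤ d - 2)]
    nlinarith [mul_nonneg (by linarith : (0:ℝ) ≤ s - 1) h1]
  have hmu : d ^ 2 + 1 ≤ m + u := by nlinarith
  have hb : (0:ℝ) ≤ d - 1 - s := by linarith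
  nlinarith [mul_nonneg (by linarith : 0 ≤ m + u - (d ^ 2 + 1)) (by linarith : (0:ℝ) ≤ d - 1),
    mul_nonneg (by linarith : 0 ≤ m + u - (d ^ 2 + 1)) hu0, mul_nonneg hm₀ hu0,
    mul_nonneg hb (by linarith : (0:ℝ) ≤ d - 2),
    mul_nonneg (mul_nonneg hb (by linarith : (0:ℝ) ≤ d - 2)) (by linarith : (0:ℝ) ≤ d - 1),
    sq_nonneg u, mul_nonneg hm₀ (by linarith : (0:ℝ) ≤ d - 1)]

lemma rowSum_lt_of_eq_zero (hd : 3 ≤ d) (hs₁ : 1 ≤ s) (hs₂ : s ≤ d - 1) (hn : 2 * d ^ 2 ≤ n)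
    (ht : t = (d - 2) * s + 1) (hp : p = d + 1 - s) (hm : m = 0) :
    (s - 1) * (s + (m + t * p) - 1) + (m * (s + m - 1) + t * (p * (s + p - 1)))
      < (n - (d - 1) ^ 2 - 1) ^ 2 := by
  subst ht hp hm
  set tp := ((d - 2) * s + 1) * (d + 1 - s)
  have htp0 : 0 ≤ tp := mul_nonneg (by nlinarith) (by linarith)
  -- AM–GM: the factors `(d - 2) * s + 1` and `(d - 2) * (d + 1 - s)` sum to `d² - d - 1`.
  have h4tp : 4 * (d - 2) * tp ≤ (d ^ 2 - d - 1) ^ 2 := by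
    nlinarith [sq_nonneg ((d - 2) * s + 1 - (d - 2) * (d + 1 - s))]
  have hK : (d ^ 2 + 2 * d - 2) ^ 2 ≤ (n - (d - 1) ^ 2 - 1) ^ 2 := by
    nlinarith [sq_nonneg (n - (d - 1) ^ 2 - 1 - (d ^ 2 + 2 * d - 2))]
  nlinarith [mul_nonneg (by linarith : (0:ℝ) ≤ d - 1)
      (by linarith : (0:ℝ) ≤ (d ^ 2 - d - 1) ^ 2 - 4 * (d - 2) * tp),
    mul_nonneg (by linarith : (0:ℝ) ≤ d - 1 - s) (by linarith : (0:ℝ) ≤ s + tp - 1),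
    mul_nonneg (by linarith : (0:ℝ) ≤ d - 1 - s) htp0,
    mul_nonneg (by linarith : (0:ℝ) ≤ d - 3) (by linarith : (0:ℝ) ≤ d)]

end Arithmetic

lemma specRad_gJoin_lt {δ n s : ℕ} (hδ : 3 ≤ δ) (hn : 2 * δ ^ 2 ≤ n) (hs₁ : 1 ≤ s)
    (hs₂ : s ≤ δ - 1) :
    specRad (gJoin s (n - s - ((δ - 2) * s + 1) * (δ + 1 - s)) ((δ - 2) * s + 1) (δ + 1 - s))
      < (n : ℝ) - ((δ : ℝ) - 1) ^ 2 - 1 := by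
  set t := (δ - 2) * s + 1 with ht
  set p := δ + 1 - s with hp
  have htR : (t : ℝ) = (δ - 2) * s + 1 := by
    rw [ht, Nat.cast_add, Nat.cast_mul, Nat.cast_sub (by omega)]; norm_num
  have hpR : (p : ℝ) = δ + 1 - s := by
    rw [hp, Nat.cast_sub (by omega)]; norm_num
  have hδR : (3 : ℝ) ≤ δ := by exact_mod_cast hδ
  have hs₁R : (1 : ℝ) ≤ s := by exact_mod_cast hs₁
  have hs₂R : (s : ℝ) ≤ δ - 1 := by
    rw [le_sub_iff_add_le]; exact_mod_cast (by omega : s + 1 ≤ δ)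
  have hnR : 2 * (δ : ℝ) ^ 2 ≤ n := by exact_mod_cast hn
  have htp : 0 < t * p := Nat.mul_pos (by omega) (by omega)
  refine (specRad_gJoin_le_sqrt hs₁ (htp.trans_le (Nat.le_add_left _ _))).trans_lt
    ((Real.sqrt_lt' (by nlinarith)).mpr ?_)
  -- `n - s - t * p` truncates to `0` when `n < s + t * p`.
  rcases le_or_gt (s + t * p) n with hA | hB
  · refine rowSum_lt_of_eq_sub hδR hs₁R hs₂R hnR htR hpR (Nat.cast_nonneg _) ?_
    rw [Nat.sub_sub, Nat.cast_sub hA]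
    push_cast
    ring
  · exact rowSum_lt_of_eq_zero hδR hs₁R hs₂R hnR htR hpR (by rw [Nat.cast_eq_zero]; omega)

/-- Let `δ ≥ 3`, `n ≥ 2δ²` and `s` be integers with `1 ≤ s ≤ δ − 1`.  Then
`ρ(K_s ∨ (K_{n−s−((δ−2)s+1)(δ+1−s)} ∪ ((δ−2)s+1)K_{δ+1−s})) <
  ρ(K_δ ∨ (K_{n−δ(δ−1)−1} ∪ (δ(δ−2)+1)K_1))`. -/
theorem stmt_11 (δ n s : ℕ) (hδ : 3 ≤ δ) (hn : 2 * δ ^ 2 ≤ n)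
    (hs₁ : 1 ≤ s) (hs₂ : s ≤ δ - 1) :
    specRad (gJoin s (n - s - ((δ - 2) * s + 1) * (δ + 1 - s)) ((δ - 2) * s + 1) (δ + 1 - s)) <
      specRad (gJoin δ (n - δ * (δ - 1) - 1) (δ * (δ - 2) + 1) 1) := by
  have hn' : δ * (δ - 1) + 1 < n := by
    have : δ * (δ - 1) ≤ δ ^ 2 := by rw [sq]; exact Nat.mul_le_mul_left _ (Nat.sub_le _ _)
    nlinarith
  refine (specRad_gJoin_lt hδ hn hs₁ hs₂).trans_le (le_of_eq_of_le ?_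
    (sub_one_le_specRad_gJoin (by omega)))
  rw [Nat.sub_sub, Nat.cast_sub hn'.le]
  push_cast [Nat.cast_sub (by omega : 1 ≤ δ)]
  ring
end
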